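/- arXiv:2502.11526 — 7 statements merged into one kernel-verified Lean document; each statement's English description precedes it below -/
import Mathlib

section
/- Let 1/2 ≤ p ≤ 1 and 0 ≤ r ≤ 1/2 be real numbers. For any reals x, y with 0 ≤ x ≤ y ≤ 1, it holds that (1+x)^r − (p·x)^r ≥ (1+y)^r − (p·y)^r. -/
theorem stmt_3 (p r x y : ℝ) (hp1 : 1/2 ≤ p) (hp2 : p ≤ 1)
    (hr1 : 0 ≤ r) (hr2 : r ≤ 1/2)
    (hx : 0 ≤ x) (hxy : x ≤ y) (hy : y ≤ 1) :
    (1 + x) ^ r - (p * x) ^ r ≥ (1 + y) ^ r - (p * y) ^ r := by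
  rcases eq_or_lt_of_le hr1 with hr0 | hr0
  · simp [← hr0]
  have hp0 : (0:ℝ) < p := lt_of_lt_of_le (by norm_num) hp1
  have key : AntitoneOn (fun t : ℝ => (1+t)^r - p^r * t^r) (Set.Icc 0 1) := by
    apply antitoneOn_of_deriv_nonpos (convex_Icc 0 1)
    · apply ContinuousOn.sub
      · exact (Continuous.comp
          (continuous_iff_continuousAt.mpr fun z => Real.continuousAt_rpow_const z r (Or.inr hr1))
          (continuous_const.add continuous_id)).continuousOn
      · exact (continuous_const.mul
          (continuous_iff_continuousAt.mpr fun z => Real.continuousAt_rpow_const z r (Or.inr hr1))).continuousOn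
    case hf' =>
      intro t ht
      rw [interior_Icc] at ht
      obtain ⟨ht0, ht1⟩ := ht
      have h1t : (0:ℝ) < 1 + t := by linarith
      have h1 : HasDerivAt (fun s : ℝ => (1+s)^r) (r * (1+t)^(r-1)) t := by
        have := (Real.hasDerivAt_rpow_const (x := 1+t) (p := r) (Or.inl h1t.ne')).comp t
          ((hasDerivAt_id t).const_add 1)
        simpa [Function.comp_def] using this
      have h2 : HasDerivAt (fun s : ℝ => p^r * s^r) (p^r * (r * t^(r-1))) t :=
        (Real.hasDerivAt_rpow_const (x := t) (p := r) (Or.inl ht0.ne')).const_mul _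
      exact (h1.sub h2).differentiableAt.differentiableWithinAt
    case hf'_nonpos =>
      intro t ht
      rw [interior_Icc] at ht
      obtain ⟨ht0, ht1⟩ := ht
      have h1t : (0:ℝ) < 1 + t := by linarith
      have h1 : HasDerivAt (fun s : ℝ => (1+s)^r) (r * (1+t)^(r-1)) t := by
        have := (Real.hasDerivAt_rpow_const (x := 1+t) (p := r) (Or.inl h1t.ne')).comp t
          ((hasDerivAt_id t).const_add 1)
        simpa [Function.comp_def] using this
      have h2 : HasDerivAt (fun s : ℝ => p^r * s^r) (p^r * (r * t^(r-1))) t :=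
        (Real.hasDerivAt_rpow_const (x := t) (p := r) (Or.inl ht0.ne')).const_mul _
      rw [(show HasDerivAt (fun s => (1+s)^r - p^r * s^r) (r * (1+t)^(r-1) - p^r * (r * t^(r-1))) t from h1.sub h2).deriv]
      have core : (1+t)^(r-1) ≤ p^r * t^(r-1) := by
        have h1r : 0 ≤ 1 - r := by linarith
        have hdiv : t / (1+t) ≤ 1/2 := by
          rw [div_le_div_iff₀ h1t (by norm_num)]
          linarith
        have step1 : (t/(1+t))^(1-r) ≤ ((1:ℝ)/2)^(1-r) :=
          Real.rpow_le_rpow (by positivity) hdiv h1r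
        have step2 : ((1:ℝ)/2)^(1-r) ≤ ((1:ℝ)/2)^r :=
          Real.rpow_le_rpow_of_exponent_ge (by norm_num) (by norm_num) (by linarith)
        have step3 : ((1:ℝ)/2)^r ≤ p^r :=
          Real.rpow_le_rpow (by norm_num) hp1 hr1
        have hchain : t^(1-r) / (1+t)^(1-r) ≤ p^r := by
          rw [← Real.div_rpow ht0.le h1t.le]
          linarith
        have hmain : t^(1-r) ≤ p^r * (1+t)^(1-r) := by
          rw [div_le_iff₀ (by positivity)] at hchain
          linarith
        have hrw1 : (1+t)^(r-1) = ((1+t)^(1-r))⁻¹ := by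
          rw [← Real.rpow_neg h1t.le]; ring_nf
        have hrw2 : t^(r-1) = (t^(1-r))⁻¹ := by
          rw [← Real.rpow_neg ht0.le]; ring_nf
        have hA : 0 < (1+t)^(1-r) := Real.rpow_pos_of_pos h1t _
        have hB : 0 < t^(1-r) := Real.rpow_pos_of_pos ht0 _
        rw [hrw1, hrw2, ← div_eq_mul_inv, le_div_iff₀ hB, inv_mul_eq_div,
          div_le_iff₀ hA]
        linarith
      nlinarith [Real.rpow_nonneg ht0.le (r-1), Real.rpow_nonneg h1t.le (r-1)]
  have hrw : ∀ z : ℝ, 0 ≤ z → (p * z)^r = p^r * z^r := fun z hz =>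
    Real.mul_rpow hp0.le hz
  have hxle1 : x ≤ 1 := le_trans hxy hy
  have hy0 : 0 ≤ y := le_trans hx hxy
  have := key (Set.mem_Icc.mpr ⟨hx, hxle1⟩) (Set.mem_Icc.mpr ⟨hy0, hy⟩) hxy
  simp only at this
  rw [ge_iff_le, hrw x hx, hrw y hy0]
  linarith
end

section
/- Let a, b ≥ 0 with a^γ ≥ l^δ · b^γ, where γ ≥ 2, l ≥ 1, δ ≥ 1 are reals, and let ω ≥ 1 and α ≥ γ be reals. If c ≥ 0 satisfies c^γ ≥ a^γ + ω·b^γ, then c^α ≥ a^α + ((ω + l^δ)^{α/γ} − l^{δα/γ})·b^α. -/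
open Real Set

lemma diff_rpow_mono (t w : ℝ) (ht : 1 ≤ t) (hw : 0 ≤ w) :
    MonotoneOn (fun s : ℝ => (s + w) ^ t - s ^ t) (Set.Ici 0) := by
  have ht0 : (0:ℝ) ≤ t := le_trans zero_le_one ht
  apply monotoneOn_of_deriv_nonneg (convex_Ici 0)
  · apply Continuous.continuousOn
    have h1 : Continuous fun s : ℝ => (s + w) ^ t := by
      rw [continuous_iff_continuousAt]
      intro x
      exact (Real.continuousAt_rpow_const _ _ (Or.inr ht0)).comp
        ((continuous_id.add continuous_const).continuousAt)
    have h2 : Continuous fun s : ℝ => s ^ t := by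
      rw [continuous_iff_continuousAt]
      intro x
      exact Real.continuousAt_rpow_const _ _ (Or.inr ht0)
    exact h1.sub h2
  · intro s hs
    rw [interior_Ici] at hs
    have h1 : HasDerivAt (fun s : ℝ => (s + w) ^ t)
        (t * (s + w) ^ (t - 1) * 1) s := by
      exact (Real.hasDerivAt_rpow_const (Or.inr ht)).comp s
        ((hasDerivAt_id s).add_const w)
    have h2 : HasDerivAt (fun s : ℝ => s ^ t) (t * s ^ (t - 1)) s :=
      Real.hasDerivAt_rpow_const (Or.inr ht)
    exact ((h1.sub h2).differentiableAt).differentiableWithinAt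
  · intro s hs
    rw [interior_Ici] at hs
    have hs0 : (0:ℝ) < s := hs
    have h1 : HasDerivAt (fun s : ℝ => (s + w) ^ t)
        (t * (s + w) ^ (t - 1) * 1) s := by
      exact (Real.hasDerivAt_rpow_const (Or.inr ht)).comp s
        ((hasDerivAt_id s).add_const w)
    have h2 : HasDerivAt (fun s : ℝ => s ^ t) (t * s ^ (t - 1)) s :=
      Real.hasDerivAt_rpow_const (Or.inr ht)
    rw [(show HasDerivAt (fun s : ℝ => (s + w) ^ t - s ^ t) _ s from h1.sub h2).deriv]
    have : s ^ (t - 1) ≤ (s + w) ^ (t - 1) :=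
      Real.rpow_le_rpow hs0.le (by linarith) (by linarith)
    nlinarith

theorem stmt_4 (a b c γ l δ ω α : ℝ)
    (ha : 0 ≤ a) (hb : 0 ≤ b) (hc : 0 ≤ c)
    (hγ : 2 ≤ γ) (hl : 1 ≤ l) (hδ : 1 ≤ δ) (hω : 1 ≤ ω) (hα : γ ≤ α)
    (hab : a ^ γ ≥ l ^ δ * b ^ γ)
    (hcab : c ^ γ ≥ a ^ γ + ω * b ^ γ) :
    c ^ α ≥ a ^ α + ((ω + l ^ δ) ^ (α / γ) - l ^ (δ * α / γ)) * b ^ α := by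
  have hγ0 : (0:ℝ) < γ := by linarith
  set t := α / γ with htdef
  have ht1 : 1 ≤ t := (one_le_div hγ0).2 hα
  have ht0 : (0:ℝ) ≤ t := by linarith
  have hl0 : (0:ℝ) ≤ l := by linarith
  have hL : (0:ℝ) ≤ l ^ δ := Real.rpow_nonneg hl0 δ
  have hbγ : (0:ℝ) ≤ b ^ γ := Real.rpow_nonneg hb γ
  have haγ : (0:ℝ) ≤ a ^ γ := Real.rpow_nonneg ha γ
  have hω0 : (0:ℝ) ≤ ω := by linarith
  have hγt : γ * t = α := by rw [htdef]; field_simp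
  -- rewrite powers
  have hca : c ^ α = (c ^ γ) ^ t := by
    rw [← Real.rpow_mul hc, hγt]
  have haa : a ^ α = (a ^ γ) ^ t := by
    rw [← Real.rpow_mul ha, hγt]
  have hba : b ^ α = (b ^ γ) ^ t := by
    rw [← Real.rpow_mul hb, hγt]
  have hlδ : l ^ (δ * α / γ) = (l ^ δ) ^ t := by
    rw [← Real.rpow_mul hl0, htdef, mul_div_assoc]
  -- monotone difference
  have key := diff_rpow_mono t (ω * b ^ γ) ht1 (mul_nonneg hω0 hbγ)
  have hmem1 : l ^ δ * b ^ γ ∈ Set.Ici (0:ℝ) := mul_nonneg hL hbγ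
  have hmem2 : a ^ γ ∈ Set.Ici (0:ℝ) := haγ
  have hkey : (l ^ δ * b ^ γ + ω * b ^ γ) ^ t - (l ^ δ * b ^ γ) ^ t ≤ (a ^ γ + ω * b ^ γ) ^ t - (a ^ γ) ^ t := key hmem1 hmem2 hab
  -- compute left side of hkey
  have e1 : (l ^ δ * b ^ γ + ω * b ^ γ) ^ t = (ω + l ^ δ) ^ t * (b ^ γ) ^ t := by
    rw [show l ^ δ * b ^ γ + ω * b ^ γ = (ω + l ^ δ) * b ^ γ by ring,
      Real.mul_rpow (by linarith) hbγ]
  have e2 : (l ^ δ * b ^ γ) ^ t = (l ^ δ) ^ t * (b ^ γ) ^ t :=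
    Real.mul_rpow hL hbγ
  rw [e1, e2] at hkey
  -- c^γ ≥ a^γ + ω b^γ ⇒ rpow
  have hc1 : (a ^ γ + ω * b ^ γ) ^ t ≤ (c ^ γ) ^ t :=
    Real.rpow_le_rpow (by positivity) hcab ht0
  rw [ge_iff_le, hca, haa, hba, hlδ]
  calc (a ^ γ) ^ t + ((ω + l ^ δ) ^ t - (l ^ δ) ^ t) * (b ^ γ) ^ t
      ≤ (a ^ γ + ω * b ^ γ) ^ t := by nlinarith [hkey]
    _ ≤ (c ^ γ) ^ t := hc1
end

section
/- Let a, b ≥ 0 with b > 0, and suppose a^γ ≤ l·b^γ for reals γ ≥ 2 and 0 ≤ l ≤ 1. Let ω ≥ 1, 1/2 ≤ p ≤ 1, and 0 ≤ β ≤ γ/2. If c ≥ 0 satisfies c^γ ≥ a^γ + ω·b^γ, then c^β ≥ p^{β/γ}·a^β + ((ω+l)^{β/γ} − (p·l)^{β/γ})·b^β. -/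
open Real Set

private lemma key_anti (t p w : ℝ) (ht0 : 0 ≤ t) (ht1 : t ≤ 1/2)
    (hp1 : 1/2 ≤ p) (hp2 : p ≤ 1) (hw : 0 < w) :
    AntitoneOn (fun u => (u + w) ^ t - (p * u) ^ t) (Set.Icc 0 w) := by
  have hp0 : 0 < p := by linarith
  apply antitoneOn_of_deriv_nonpos (convex_Icc 0 w)
  · apply ContinuousOn.sub
    · apply ContinuousOn.rpow_const (continuous_add_right w).continuousOn
      intro u hu
      left
      have := hu.1
      intro h
      nlinarith
    · exact ContinuousOn.rpow_const (continuous_const.mul continuous_id).continuousOn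
        (fun u hu => Or.inr ht0)
  · rw [interior_Icc]
    intro u hu
    obtain ⟨hu0, huw⟩ := hu
    have h1 := ((hasDerivAt_id u).add_const w).rpow_const (p := t) (Or.inl (by positivity))
    have h2 := (((hasDerivAt_id u)).const_mul p).rpow_const (p := t) (Or.inl (by positivity))
    simp only [id_eq, one_mul, mul_one] at h1 h2
    exact (h1.sub h2).differentiableAt.differentiableWithinAt
  · rw [interior_Icc]
    intro u hu
    obtain ⟨hu0, huw⟩ := hu
    have huw0 : (0:ℝ) < u + w := by linarith
    have h1 := ((hasDerivAt_id u).add_const w).rpow_const (p := t) (Or.inl (by positivity))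
    have h2 := (((hasDerivAt_id u)).const_mul p).rpow_const (p := t) (Or.inl (by positivity))
    simp only [id_eq, one_mul, mul_one] at h1 h2
    rw [show (fun u => (u + w) ^ t - (p * u) ^ t) = ((fun y => (y + w) ^ t) - fun y => (p * y) ^ t) from rfl, (h1.sub h2).deriv]
    -- key inequality : (u+w)^(t-1) ≤ p^t * u^(t-1)
    have hA : (0:ℝ) < (u + w) ^ (1 - t) := Real.rpow_pos_of_pos huw0 _
    have hB : (0:ℝ) < u ^ (1 - t) := Real.rpow_pos_of_pos hu0 _
    have hdiv : u / (u + w) ≤ 1/2 := by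
      rw [div_le_iff₀ huw0]; linarith
    have c1 : (u / (u + w)) ^ (1 - t) ≤ ((1:ℝ)/2) ^ (1 - t) :=
      Real.rpow_le_rpow (by positivity) hdiv (by linarith)
    have c2 : ((1:ℝ)/2) ^ (1 - t) ≤ ((1:ℝ)/2) ^ t :=
      Real.rpow_le_rpow_of_exponent_ge (by norm_num) (by norm_num) (by linarith)
    have c3 : ((1:ℝ)/2) ^ t ≤ p ^ t := Real.rpow_le_rpow (by norm_num) hp1 ht0
    have c4 : u ^ (1 - t) / (u + w) ^ (1 - t) ≤ p ^ t := by
      rw [← Real.div_rpow hu0.le huw0.le]; linarith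
    have c5 : u ^ (1 - t) ≤ p ^ t * (u + w) ^ (1 - t) := by
      rw [div_le_iff₀ hA] at c4; linarith
    have hkey : (u + w) ^ (t - 1) ≤ p ^ t * u ^ (t - 1) := by
      have e1 : (u + w) ^ (t - 1) = ((u + w) ^ (1 - t))⁻¹ := by
        rw [show t - 1 = -(1 - t) by ring, Real.rpow_neg huw0.le]
      have e2 : u ^ (t - 1) = (u ^ (1 - t))⁻¹ := by
        rw [show t - 1 = -(1 - t) by ring, Real.rpow_neg hu0.le]
      have h6 : (1:ℝ) / ((u + w) ^ (1 - t)) ≤ p ^ t / (u ^ (1 - t)) := by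
        rw [div_le_div_iff₀ hA hB]; nlinarith
      rw [e1, e2, ← one_div, div_eq_mul_inv (p ^ t) _] at *
      exact h6
    have hpp : (p * u) ^ (t - 1) * p = p ^ t * u ^ (t - 1) := by
      rw [Real.mul_rpow hp0.le hu0.le,
        show p ^ (t-1) * u ^ (t-1) * p = (p ^ (t-1) * p) * u ^ (t-1) from by ring,
        ← Real.rpow_add_one hp0.ne' (t-1)]
      norm_num
    have : t * (u + w) ^ (t - 1) - p * t * (p * u) ^ (t - 1) =
        t * ((u + w) ^ (t - 1) - p ^ t * u ^ (t - 1)) := by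
      rw [show p * t * (p * u) ^ (t - 1) = t * ((p * u) ^ (t - 1) * p) from by ring, hpp]
      ring
    rw [this]
    exact mul_nonpos_of_nonneg_of_nonpos ht0 (by linarith)

theorem stmt_5 (a b c γ l ω p β : ℝ)
    (ha : 0 ≤ a) (hb : 0 < b) (hc : 0 ≤ c)
    (hγ : 2 ≤ γ) (hl0 : 0 ≤ l) (hl1 : l ≤ 1) (hω : 1 ≤ ω)
    (hp1 : 1/2 ≤ p) (hp2 : p ≤ 1)
    (hβ0 : 0 ≤ β) (hβ1 : β ≤ γ / 2)
    (hab : a ^ γ ≤ l * b ^ γ)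
    (hcab : c ^ γ ≥ a ^ γ + ω * b ^ γ) :
    c ^ β ≥ p ^ (β / γ) * a ^ β + ((ω + l) ^ (β / γ) - (p * l) ^ (β / γ)) * b ^ β := by
  have hγ0 : (0:ℝ) < γ := by linarith
  set t := β / γ with hts
  have ht0 : 0 ≤ t := by positivity
  have ht1 : t ≤ 1/2 := by
    rw [hts, div_le_iff₀ hγ0]; linarith
  have hγt : γ * t = β := by
    rw [hts]; field_simp
  have hY : (0:ℝ) < b ^ γ := Real.rpow_pos_of_pos hb γ
  have hx0 : (0:ℝ) ≤ a ^ γ := Real.rpow_nonneg ha γ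
  have hw : (0:ℝ) < ω * b ^ γ := by nlinarith
  have hmem1 : a ^ γ ∈ Set.Icc 0 (ω * b ^ γ) := ⟨hx0, by nlinarith⟩
  have hmem2 : l * b ^ γ ∈ Set.Icc 0 (ω * b ^ γ) := ⟨by positivity, by nlinarith⟩
  have key := key_anti t p (ω * b ^ γ) ht0 ht1 hp1 hp2 hw hmem1 hmem2 hab
  simp only at key
  -- key : (l*b^γ + ω*b^γ)^t - (p*(l*b^γ))^t ≤ (a^γ + ω*b^γ)^t - (p*a^γ)^t
  have hp0 : (0:ℝ) < p := by linarith
  have h1 : c ^ β = (c ^ γ) ^ t := by rw [← Real.rpow_mul hc, hγt]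
  have h2 : (a ^ γ + ω * b ^ γ) ^ t ≤ (c ^ γ) ^ t :=
    Real.rpow_le_rpow (by positivity) hcab ht0
  have e1 : (p * a ^ γ) ^ t = p ^ t * a ^ β := by
    rw [Real.mul_rpow hp0.le hx0, ← Real.rpow_mul ha, hγt]
  have e2 : (l * b ^ γ + ω * b ^ γ) ^ t = (ω + l) ^ t * b ^ β := by
    rw [show l * b ^ γ + ω * b ^ γ = (ω + l) * b ^ γ from by ring,
      Real.mul_rpow (by linarith) hY.le, ← Real.rpow_mul hb.le, hγt]
  have e3 : (p * (l * b ^ γ)) ^ t = (p * l) ^ t * b ^ β := by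
    rw [show p * (l * b ^ γ) = (p * l) * b ^ γ from by ring,
      Real.mul_rpow (by positivity) hY.le, ← Real.rpow_mul hb.le, hγt]
  rw [e1, e2, e3] at key
  linarith [h1 ▸ h2, key]
end

section
/- For reals ω ≥ 1, l ≥ 1, δ ≥ 1 and exponent t ≥ 1 (where t = α/γ), one has (ω + l^δ)^t − (l^δ)^t ≥ (ω + l)^t − l^t ≥ 2^t − 1. -/
lemma key_mono (c t : ℝ) (hc : 0 ≤ c) (ht : 1 ≤ t) :
    MonotoneOn (fun x : ℝ => (x + c) ^ t - x ^ t) (Set.Ici (1:ℝ)) := by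
  have ht' : 0 ≤ t - 1 := by linarith
  have hd : ∀ x ∈ Set.Ioi (1:ℝ),
      HasDerivAt (fun x : ℝ => (x + c) ^ t - x ^ t)
        (t * (x + c) ^ (t - 1) - t * x ^ (t - 1)) x := by
    intro x hx
    have h1 : HasDerivAt (fun x : ℝ => (x + c) ^ t) (t * (x + c) ^ (t - 1)) x := by
      have := (Real.hasDerivAt_rpow_const (x := x + c) (p := t) (Or.inr ht)).comp x
        ((hasDerivAt_id x).add_const c)
      simpa [mul_comm, Function.comp_def] using this
    have h2 : HasDerivAt (fun x : ℝ => x ^ t) (t * x ^ (t - 1)) x :=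
      Real.hasDerivAt_rpow_const (x := x) (p := t) (Or.inr ht)
    exact h1.sub h2
  apply monotoneOn_of_deriv_nonneg (convex_Ici 1)
  · apply ContinuousOn.sub
    · exact ((continuous_id.add continuous_const).continuousOn).rpow_const
        (fun x _ => Or.inr (le_trans zero_le_one ht))
    · exact (continuousOn_id).rpow_const (fun x _ => Or.inr (le_trans zero_le_one ht))
  · intro x hx
    rw [interior_Ici] at hx
    exact ((hd x hx).differentiableAt).differentiableWithinAt
  · intro x hx
    rw [interior_Ici] at hx
    have hx0 : (0:ℝ) < x := lt_trans zero_lt_one hx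
    rw [(hd x hx).deriv]
    have : x ^ (t - 1) ≤ (x + c) ^ (t - 1) :=
      Real.rpow_le_rpow hx0.le (by linarith) ht'
    nlinarith [le_trans zero_le_one ht]

theorem stmt_6 (ω l δ t : ℝ) (hω : 1 ≤ ω) (hl : 1 ≤ l) (hδ : 1 ≤ δ) (ht : 1 ≤ t) :
    (ω + l ^ δ) ^ t - (l ^ δ) ^ t ≥ (ω + l) ^ t - l ^ t ∧
      (ω + l) ^ t - l ^ t ≥ 2 ^ t - 1 := by
  have hω0 : (0:ℝ) ≤ ω := by linarith
  have hlδ : l ≤ l ^ δ := by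
    nth_rewrite 1 [← Real.rpow_one l]
    exact Real.rpow_le_rpow_of_exponent_le hl hδ
  have hlδ1 : (1:ℝ) ≤ l ^ δ := le_trans hl hlδ
  constructor
  · have := key_mono ω t hω0 ht (Set.mem_Ici.mpr hl) (Set.mem_Ici.mpr hlδ1) hlδ
    simpa [add_comm] using this
  · have h1 : (1 + l) ^ t ≤ (ω + l) ^ t :=
      Real.rpow_le_rpow (by linarith) (by linarith) (by linarith)
    have h2 := key_mono 1 t zero_le_one ht (Set.mem_Ici.mpr le_rfl) (Set.mem_Ici.mpr hl) hl
    simp only [Real.one_rpow] at h2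
    have h3 : (2:ℝ) ^ t - 1 ≤ (1 + l) ^ t - l ^ t := by
      rw [show (2:ℝ) = 1 + 1 by norm_num, show (1:ℝ) + l = l + 1 from add_comm 1 l]
      simpa using h2
    linarith
end

section
/- For real numbers k ≥ 1 and 0 ≤ r ≤ 1 (with r playing the role of β/γ), it holds that ((1+k)^r − 1)/k^r ≥ 2^r − 1. -/
theorem stmt_8 (k r : ℝ) (hk : 1 ≤ k) (hr0 : 0 ≤ r) (hr1 : r ≤ 1) :
    ((1 + k) ^ r - 1) / k ^ r ≥ 2 ^ r - 1 := by
  have hk0 : (0:ℝ) < k := by linarith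
  have hd : (0:ℝ) < 2 * k - 1 := by linarith
  have hcc := Real.concaveOn_rpow hr0 hr1
  have ha : (0:ℝ) ≤ k / (2 * k - 1) := by positivity
  have hb : (0:ℝ) ≤ (k - 1) / (2 * k - 1) := by
    apply div_nonneg <;> linarith
  have hab : k / (2 * k - 1) + (k - 1) / (2 * k - 1) = 1 := by
    rw [← add_div, div_eq_one_iff_eq hd.ne']; ring
  have hx : (2 * k : ℝ) ∈ Set.Ici (0:ℝ) := by simp; linarith
  have hy : (1 : ℝ) ∈ Set.Ici (0:ℝ) := by simp
  have h1 := hcc.2 hx hy ha hb hab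
  have hab' : (k - 1) / (2 * k - 1) + k / (2 * k - 1) = 1 := by
    rw [← add_div, div_eq_one_iff_eq hd.ne']; ring
  have h2 := hcc.2 hx hy hb ha hab'
  simp only [smul_eq_mul] at h1 h2
  have e1 : k / (2 * k - 1) * (2 * k) + (k - 1) / (2 * k - 1) * 1 = 1 + k := by
    rw [div_mul_eq_mul_div, div_mul_eq_mul_div, ← add_div, div_eq_iff hd.ne']; ring
  have e2 : (k - 1) / (2 * k - 1) * (2 * k) + k / (2 * k - 1) * 1 = k := by
    rw [div_mul_eq_mul_div, div_mul_eq_mul_div, ← add_div, div_eq_iff hd.ne']; ring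
  rw [e1, Real.one_rpow] at h1
  rw [e2, Real.one_rpow] at h2
  -- sum: (2k)^r + 1 ≤ (1+k)^r + k^r
  have hsum : (2 * k) ^ r + 1 ≤ (1 + k) ^ r + k ^ r := by
    have := add_le_add h1 h2
    have hc : k / (2 * k - 1) * (2 * k) ^ r + (k - 1) / (2 * k - 1) * 1 +
        ((k - 1) / (2 * k - 1) * (2 * k) ^ r + k / (2 * k - 1) * 1) =
        (k / (2 * k - 1) + (k - 1) / (2 * k - 1)) * ((2 * k) ^ r + 1) := by ring
    rw [hc, hab, one_mul] at this
    linarith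
  have hmul : (2 * k) ^ r = 2 ^ r * k ^ r :=
    Real.mul_rpow (by norm_num) hk0.le
  rw [ge_iff_le, le_div_iff₀ (Real.rpow_pos_of_pos hk0 r)]
  nlinarith [hsum, hmul]
end

section
/- Let N ≥ 4 and 1 ≤ z ≤ N−3. Let c : Fin N → ℝ≥0 where c 0 denotes C_a(ρ_{A|B₁⋯B_{N−1}}) and suppose there are nonnegative reals a₁,…,a_{N−1} (the pairwise values C_a(ρ_{AB_j})) and intermediate values t₁,…,t_{N−1} with t₁ = c 0, t_{N−1} = a_{N−1}, such that for 1 ≤ i ≤ z: a_i^γ ≥ l_i^{δ_i}·t_{i+1}^γ and t_i^γ ≥ a_i^γ + ω_i·t_{i+1}^γ, and for z+1 ≤ j ≤ N−2: t_{j+1}^γ ≥ l_j^{δ_j}·a_j^γ and t_j^γ ≥ ω_j·a_j^γ + t_{j+1}^γ, where ω_r ≥ 1, l_r ≥ 1, δ_r ≥ 1, γ ≥ 2. Then for all α ≥ γ, writing Ω_r = (ω_r + l_r^{δ_r})^{α/γ} − l_r^{δ_r·α/γ}: t₁^α ≥ a₁^α + Σ_{i=2}^{z} (Π_{s=1}^{i−1}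 Ω_s)·a_i^α + (Π_{s=1}^{z} Ω_s)·(Σ_{j=z+1}^{N−2} Ω_j·a_j^α) + (Π_{s=1}^{z} Ω_s)·a_{N−1}^α. -/
open Finset

private lemma mono_aux (w p : ℝ) (hw : 0 ≤ w) (hp : 1 ≤ p) :
    MonotoneOn (fun v : ℝ => (v + w) ^ p - v ^ p) (Set.Ici 0) := by
  have hd : ∀ x : ℝ, HasDerivAt (fun v : ℝ => (v + w) ^ p - v ^ p)
      (p * (x + w) ^ (p - 1) * 1 - p * x ^ (p - 1)) x := by
    intro x
    exact ((Real.hasDerivAt_rpow_const (Or.inr hp)).comp x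
      ((hasDerivAt_id x).add_const w)).sub (Real.hasDerivAt_rpow_const (Or.inr hp))
  apply monotoneOn_of_deriv_nonneg (convex_Ici 0)
  · exact (continuous_iff_continuousAt.mpr fun x => (hd x).differentiableAt.continuousAt).continuousOn
  · exact fun x hx => (hd x).differentiableAt.differentiableWithinAt
  · intro x hx
    rw [interior_Ici] at hx
    rw [(hd x).deriv]
    have hx0 : (0:ℝ) ≤ x := le_of_lt hx
    have h1 : x ^ (p-1) ≤ (x + w) ^ (p-1) :=
      Real.rpow_le_rpow hx0 (by linarith) (by linarith)
    nlinarith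

private lemma key (x y w L p : ℝ) (hy : 0 ≤ y) (hw : 0 ≤ w) (hL : 0 ≤ L)
    (hp : 1 ≤ p) (hxy : L * y ≤ x) :
    x ^ p + ((w + L) ^ p - L ^ p) * y ^ p ≤ (x + w * y) ^ p := by
  have hx : 0 ≤ x := le_trans (mul_nonneg hL hy) hxy
  have h := mono_aux (w * y) p (mul_nonneg hw hy) hp
    (Set.mem_Ici.mpr (mul_nonneg hL hy)) (Set.mem_Ici.mpr hx) hxy
  simp only at h
  have e1 : L * y + w * y = (w + L) * y := by ring
  rw [e1, Real.mul_rpow (by linarith) hy, Real.mul_rpow hL hy] at h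
  linarith

private lemma step' (A B C W L g p : ℝ) (hA : 0 ≤ A) (hB : 0 ≤ B) (hC : 0 ≤ C)
    (hW : 0 ≤ W) (hL : 0 ≤ L) (hg : 0 < g) (hp : 1 ≤ p)
    (h1 : L * B ^ g ≤ A ^ g) (h2 : A ^ g + W * B ^ g ≤ C ^ g) :
    A ^ (g * p) + ((W + L) ^ p - L ^ p) * B ^ (g * p) ≤ C ^ (g * p) := by
  have k := key (A ^ g) (B ^ g) W L p (Real.rpow_nonneg hB g) hW hL hp h1
  have hnn : (0:ℝ) ≤ A ^ g + W * B ^ g :=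
    add_nonneg (Real.rpow_nonneg hA g) (mul_nonneg hW (Real.rpow_nonneg hB g))
  have m : (A ^ g + W * B ^ g) ^ p ≤ (C ^ g) ^ p :=
    Real.rpow_le_rpow hnn h2 (by linarith)
  rw [Real.rpow_mul hA, Real.rpow_mul hB, Real.rpow_mul hC]
  linarith

private lemma chainB (f g Ω : ℕ → ℝ) (M : ℕ) :
    ∀ m k, k + m = M + 1 →
      (∀ j, k ≤ j → j ≤ M → Ω j * g j + f (j + 1) ≤ f j) →
      (∑ j ∈ Icc k M, Ω j * g j) + f (M + 1) ≤ f k := by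
  intro m
  induction m with
  | zero =>
    intro k hk _
    have hkk : k = M + 1 := by omega
    subst hkk
    rw [Finset.Icc_eq_empty (by omega), Finset.sum_empty]
    simp
  | succ n ih =>
    intro k hk hstep
    have hkM : k ≤ M := by omega
    have h1 := ih (k + 1) (by omega) (fun j hj1 hj2 => hstep j (by omega) hj2)
    have h2 := hstep k le_rfl hkM
    have hsum : (∑ j ∈ Icc k M, Ω j * g j)
        = Ω k * g k + ∑ j ∈ Icc (k + 1) M, Ω j * g j := by
      rw [← Finset.Ico_add_one_right_eq_Icc, Finset.sum_eq_sum_Ico_succ_bot (by omega),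
        Finset.Ico_add_one_right_eq_Icc]
    linarith

private lemma chainC (f g Ω : ℕ → ℝ) (z : ℕ) :
    ∀ m k, 1 ≤ k → k + m = z + 1 →
      (∀ i, k ≤ i → i ≤ z → g i + Ω i * f (i + 1) ≤ f i) →
      (∀ i, k ≤ i → i ≤ z → 0 ≤ Ω i) →
      (∑ i ∈ Icc k z, (∏ s ∈ Icc k (i - 1), Ω s) * g i)
        + (∏ s ∈ Icc k z, Ω s) * f (z + 1) ≤ f k := by
  intro m
  induction m with
  | zero =>
    intro k hk1 hk _ _
    have hkk : k = z + 1 := by omega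
    subst hkk
    rw [Finset.Icc_eq_empty (by omega)]
    simp
  | succ n ih =>
    intro k hk1 hk hstep hΩ
    have hkz : k ≤ z := by omega
    have h1 := ih (k + 1) (by omega) (by omega)
      (fun i hh1 hh2 => hstep i (by omega) hh2) (fun i hh1 hh2 => hΩ i (by omega) hh2)
    have h2 := hstep k le_rfl hkz
    have hΩk : 0 ≤ Ω k := hΩ k le_rfl hkz
    have hsum : (∑ i ∈ Icc k z, (∏ s ∈ Icc k (i - 1), Ω s) * g i)
        = g k + Ω k * ∑ i ∈ Icc (k + 1) z, (∏ s ∈ Icc (k + 1) (i - 1), Ω s) * g i := by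
      rw [← Finset.Ico_add_one_right_eq_Icc k z, Finset.sum_eq_sum_Ico_succ_bot (by omega),
        Finset.Ico_add_one_right_eq_Icc]
      rw [show Icc k (k - 1) = ∅ from Finset.Icc_eq_empty (by omega),
        Finset.prod_empty, one_mul]
      rw [Finset.mul_sum]
      congr 1
      apply Finset.sum_congr rfl
      intro i hi
      have hik : k + 1 ≤ i := (Finset.mem_Icc.mp hi).1
      have e1 : Icc k (i - 1) = Ico k i := by
        rw [← Finset.Ico_add_one_right_eq_Icc]; congr 1; omega
      rw [e1, Finset.prod_eq_prod_Ico_succ_bot (by omega)]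
      have e2 : Ico (k + 1) i = Icc (k + 1) (i - 1) := by
        rw [← Finset.Ico_add_one_right_eq_Icc]; congr 1; omega
      rw [e2, mul_assoc]
    have hprod : (∏ s ∈ Icc k z, Ω s) = Ω k * ∏ s ∈ Icc (k + 1) z, Ω s := by
      rw [← Finset.Ico_add_one_right_eq_Icc, Finset.prod_eq_prod_Ico_succ_bot (by omega),
        Finset.Ico_add_one_right_eq_Icc]
    rw [hsum, hprod]
    have h3 : Ω k * ((∑ i ∈ Icc (k + 1) z, (∏ s ∈ Icc (k + 1) (i - 1), Ω s) * g i)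
        + (∏ s ∈ Icc (k + 1) z, Ω s) * f (z + 1)) ≤ Ω k * f (k + 1) :=
      mul_le_mul_of_nonneg_left h1 hΩk
    rw [mul_add] at h3
    rw [mul_assoc]
    linarith

open Finset in
theorem stmt_11 (N z : ℕ) (hN : 4 ≤ N) (hz1 : 1 ≤ z) (hz2 : z ≤ N - 3)
    (a t ω l δ : ℕ → ℝ) (γ α : ℝ) (hγ : 2 ≤ γ) (hα : γ ≤ α)
    (ha : ∀ r, 0 ≤ a r) (ht : ∀ r, 0 ≤ t r)
    (hω : ∀ r, 1 ≤ r → r ≤ N - 2 → 1 ≤ ω r)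
    (hl : ∀ r, 1 ≤ r → r ≤ N - 2 → 1 ≤ l r)
    (hδ : ∀ r, 1 ≤ r → r ≤ N - 2 → 1 ≤ δ r)
    (htend : t (N - 1) = a (N - 1))
    (hi1 : ∀ i, 1 ≤ i → i ≤ z → a i ^ γ ≥ l i ^ δ i * t (i + 1) ^ γ)
    (hi2 : ∀ i, 1 ≤ i → i ≤ z → t i ^ γ ≥ a i ^ γ + ω i * t (i + 1) ^ γ)
    (hj1 : ∀ j, z + 1 ≤ j → j ≤ N - 2 → t (j + 1) ^ γ ≥ l j ^ δ j * a j ^ γ)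
    (hj2 : ∀ j, z + 1 ≤ j → j ≤ N - 2 → t j ^ γ ≥ ω j * a j ^ γ + t (j + 1) ^ γ) :
    t 1 ^ α ≥ a 1 ^ α
      + ∑ i ∈ Finset.Icc 2 z,
          (∏ s ∈ Finset.Icc 1 (i - 1),
            ((ω s + l s ^ δ s) ^ (α / γ) - l s ^ (δ s * α / γ))) * a i ^ α
      + (∏ s ∈ Finset.Icc 1 z,
          ((ω s + l s ^ δ s) ^ (α / γ) - l s ^ (δ s * α / γ)))
        * (∑ j ∈ Finset.Icc (z + 1) (N - 2),
            ((ω j + l j ^ δ j) ^ (α / γ) - l j ^ (δ j * α / γ)) * a j ^ α)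
      + (∏ s ∈ Finset.Icc 1 z,
          ((ω s + l s ^ δ s) ^ (α / γ) - l s ^ (δ s * α / γ))) * a (N - 1) ^ α := by
  have hγ0 : (0:ℝ) < γ := by linarith
  have hp1 : 1 ≤ α / γ := (one_le_div hγ0).mpr hα
  have hgp : γ * (α / γ) = α := by field_simp
  set Ω : ℕ → ℝ := fun r => (ω r + l r ^ δ r) ^ (α / γ) - l r ^ (δ r * α / γ) with hΩdef
  have hLp : ∀ r, 1 ≤ r → r ≤ N - 2 →
      (l r ^ δ r) ^ (α / γ) = l r ^ (δ r * α / γ) := by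
    intro r h1 h2
    have hl0 : (0:ℝ) ≤ l r := by have := hl r h1 h2; linarith
    rw [← Real.rpow_mul hl0, mul_div_assoc]
  have hΩnn : ∀ r, 1 ≤ r → r ≤ N - 2 → 0 ≤ Ω r := by
    intro r h1 h2
    have hl0 : (0:ℝ) ≤ l r := by have := hl r h1 h2; linarith
    have hω1 := hω r h1 h2
    have hle : (l r ^ δ r) ^ (α / γ) ≤ (ω r + l r ^ δ r) ^ (α / γ) :=
      Real.rpow_le_rpow (Real.rpow_nonneg hl0 _) (by linarith) (by linarith)
    have := hLp r h1 h2
    simp only [hΩdef]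
    linarith
  have hstep1 : ∀ i, 1 ≤ i → i ≤ z →
      a i ^ α + Ω i * t (i + 1) ^ α ≤ t i ^ α := by
    intro i h1 h2
    have h2' : i ≤ N - 2 := by omega
    have hl0 : (0:ℝ) ≤ l i := by have := hl i h1 h2'; linarith
    have hst := step' (a i) (t (i + 1)) (t i) (ω i) (l i ^ δ i) γ (α / γ)
      (ha i) (ht _) (ht _) (by have := hω i h1 h2'; linarith)
      (Real.rpow_nonneg hl0 _) hγ0 hp1 (hi1 i h1 h2) (hi2 i h1 h2)
    rw [hgp, hLp i h1 h2'] at hst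
    simpa [hΩdef] using hst
  have hstep2 : ∀ j, z + 1 ≤ j → j ≤ N - 2 →
      Ω j * a j ^ α + t (j + 1) ^ α ≤ t j ^ α := by
    intro j h1 h2
    have h1' : 1 ≤ j := by omega
    have hl0 : (0:ℝ) ≤ l j := by have := hl j h1' h2; linarith
    have hst := step' (t (j + 1)) (a j) (t j) (ω j) (l j ^ δ j) γ (α / γ)
      (ht _) (ha j) (ht _) (by have := hω j h1' h2; linarith)
      (Real.rpow_nonneg hl0 _) hγ0 hp1 (hj1 j h1 h2)
      (by have := hj2 j h1 h2; linarith)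
    rw [hgp, hLp j h1' h2] at hst
    simp only [hΩdef]
    linarith
  have hB := chainB (fun k => t k ^ α) (fun k => a k ^ α) Ω (N - 2)
    (N - 2 + 1 - (z + 1)) (z + 1) (by omega) (fun j hj1 hj2 => hstep2 j hj1 hj2)
  have hC := chainC (fun k => t k ^ α) (fun k => a k ^ α) Ω z
    z 1 le_rfl (by omega) (fun i h1 h2 => hstep1 i h1 h2) (fun i h1 h2 => hΩnn i h1 (by omega))
  rw [show N - 2 + 1 = N - 1 from by omega, htend] at hB
  have hsplit : (∑ i ∈ Icc 1 z, (∏ s ∈ Icc 1 (i - 1), Ω s) * a i ^ α)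
      = a 1 ^ α + ∑ i ∈ Icc 2 z, (∏ s ∈ Icc 1 (i - 1), Ω s) * a i ^ α := by
    rw [← Finset.Ico_add_one_right_eq_Icc 1 z, Finset.sum_eq_sum_Ico_succ_bot (by omega),
      Finset.Ico_add_one_right_eq_Icc]
    congr 1
    rw [show Icc 1 (1 - 1) = ∅ from Finset.Icc_eq_empty (by omega),
      Finset.prod_empty, one_mul]
  rw [hsplit] at hC
  have hPnn : 0 ≤ ∏ s ∈ Icc 1 z, Ω s :=
    Finset.prod_nonneg fun s hs => by
      have := Finset.mem_Icc.mp hs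
      exact hΩnn s this.1 (by omega)
  have hmul : (∏ s ∈ Icc 1 z, Ω s)
        * ((∑ j ∈ Icc (z + 1) (N - 2), Ω j * a j ^ α) + a (N - 1) ^ α)
      ≤ (∏ s ∈ Icc 1 z, Ω s) * t (z + 1) ^ α :=
    mul_le_mul_of_nonneg_left hB hPnn
  rw [mul_add] at hmul
  simp only [hΩdef] at hC hmul
  have goal' : a 1 ^ α
      + ∑ i ∈ Icc 2 z, (∏ s ∈ Icc 1 (i - 1),
          ((ω s + l s ^ δ s) ^ (α / γ) - l s ^ (δ s * α / γ))) * a i ^ α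
      + (∏ s ∈ Icc 1 z, ((ω s + l s ^ δ s) ^ (α / γ) - l s ^ (δ s * α / γ)))
        * (∑ j ∈ Icc (z + 1) (N - 2),
            ((ω j + l j ^ δ j) ^ (α / γ) - l j ^ (δ j * α / γ)) * a j ^ α)
      + (∏ s ∈ Icc 1 z, ((ω s + l s ^ δ s) ^ (α / γ) - l s ^ (δ s * α / γ)))
        * a (N - 1) ^ α ≤ t 1 ^ α := by
    linarith
  exact goal'
end

section
/- Let c, a, b ≥ 0 and let α ≥ 2, ω ≥ 1, l ≥ 1, δ ≥ 1, and suppose a² ≥ l^δ·b² and c² ≥ a² + ω·b². Then c^α ≥ a^α + ((ω + l^δ)^{α/2} − (l^δ)^{α/2})·b^α ≥ a^α + (2^{α/2} − 1)·b^α. -/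
open Real

/-- For `p ≥ 1`, the map `x ↦ (x+s)^p - x^p` is monotone on nonnegative reals. -/
lemma key_rpow (p s x₀ x : ℝ) (hp : 1 ≤ p) (hs : 0 ≤ s) (hx₀ : 0 ≤ x₀) (hx : x₀ ≤ x) :
    (x₀ + s) ^ p - x₀ ^ p ≤ (x + s) ^ p - x ^ p := by
  rcases eq_or_lt_of_le hs with rfl | hs'
  · simp
  rcases eq_or_lt_of_le hx with rfl | hx'
  · exact le_rfl
  have hcx : ConvexOn ℝ (Set.Ici 0) fun t : ℝ => t ^ p := convexOn_rpow hp
  have hx0 : (0:ℝ) ≤ x := hx₀.trans hx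
  -- slope over [x₀, x₀+s] ≤ slope over [x₀, x+s]
  have h1 : ((x₀ + s) ^ p - x₀ ^ p) / ((x₀ + s) - x₀) ≤ ((x + s) ^ p - x₀ ^ p) / ((x + s) - x₀) :=
    hcx.secant_mono (Set.mem_Ici.2 hx₀) (Set.mem_Ici.2 (by linarith)) (Set.mem_Ici.2 (by linarith))
      (by intro h; nlinarith) (by intro h; nlinarith) (by linarith)
  -- slope over [x₀, x+s] ≤ slope over [x, x+s]
  have h2 : (x₀ ^ p - (x + s) ^ p) / (x₀ - (x + s)) ≤ (x ^ p - (x + s) ^ p) / (x - (x + s)) :=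
    hcx.secant_mono (Set.mem_Ici.2 (by linarith : (0:ℝ) ≤ x + s)) (Set.mem_Ici.2 hx₀)
      (Set.mem_Ici.2 hx0) (by intro h; nlinarith) (by intro h; nlinarith) hx
  have e1 : (x₀ + s) - x₀ = s := by ring
  have e2 : ((x + s) ^ p - x₀ ^ p) / ((x + s) - x₀) = (x₀ ^ p - (x + s) ^ p) / (x₀ - (x + s)) := by
    rw [← neg_div_neg_eq]; ring_nf
  have e3 : (x ^ p - (x + s) ^ p) / (x - (x + s)) = ((x + s) ^ p - x ^ p) / s := by
    rw [← neg_div_neg_eq]; ring_nf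
  rw [e1] at h1
  rw [e3] at h2
  have := h1.trans (e2 ▸ h2)
  calc (x₀ + s) ^ p - x₀ ^ p = ((x₀ + s) ^ p - x₀ ^ p) / s * s := by field_simp
    _ ≤ ((x + s) ^ p - x ^ p) / s * s := by gcongr
    _ = (x + s) ^ p - x ^ p := by field_simp

theorem stmt_15 (a b c α ω l δ : ℝ)
    (ha : 0 ≤ a) (hb : 0 ≤ b) (hc : 0 ≤ c)
    (hα : 2 ≤ α) (hω : 1 ≤ ω) (hl : 1 ≤ l) (hδ : 1 ≤ δ)
    (hab : a ^ (2 : ℝ) ≥ l ^ δ * b ^ (2 : ℝ))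
    (hcab : c ^ (2 : ℝ) ≥ a ^ (2 : ℝ) + ω * b ^ (2 : ℝ)) :
    c ^ α ≥ a ^ α + ((ω + l ^ δ) ^ (α / 2) - (l ^ δ) ^ (α / 2)) * b ^ α ∧
      a ^ α + ((ω + l ^ δ) ^ (α / 2) - (l ^ δ) ^ (α / 2)) * b ^ α ≥
        a ^ α + (2 ^ (α / 2) - 1) * b ^ α := by
  set p := α / 2 with hpdef
  have hp : 1 ≤ p := by rw [hpdef]; linarith
  set L := l ^ δ with hLdef
  have hL : 1 ≤ L := Real.one_le_rpow hl (by linarith)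
  have hL0 : 0 ≤ L := by linarith
  set X := a ^ (2:ℝ) with hX
  set Y := b ^ (2:ℝ) with hY
  have hX0 : 0 ≤ X := Real.rpow_nonneg ha _
  have hY0 : 0 ≤ Y := Real.rpow_nonneg hb _
  have hXY : L * Y ≤ X := hab
  have hα2 : α = 2 * p := by rw [hpdef]; ring
  have haα : a ^ α = X ^ p := by rw [hX, hα2, Real.rpow_mul ha]
  have hbα : b ^ α = Y ^ p := by rw [hY, hα2, Real.rpow_mul hb]
  have hcα : c ^ α = (c ^ (2:ℝ)) ^ p := by rw [hα2, Real.rpow_mul hc]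
  have hkey : (L * Y + ω * Y) ^ p - (L * Y) ^ p ≤ (X + ω * Y) ^ p - X ^ p :=
    key_rpow p (ω * Y) (L * Y) X hp (by positivity) (by positivity) hXY
  have hmul1 : (L * Y + ω * Y) ^ p = (ω + L) ^ p * Y ^ p := by
    rw [show L * Y + ω * Y = (ω + L) * Y by ring, Real.mul_rpow (by linarith) hY0]
  have hmul2 : (L * Y) ^ p = L ^ p * Y ^ p := Real.mul_rpow hL0 hY0
  constructor
  · have h1 : (X + ω * Y) ^ p ≤ (c ^ (2:ℝ)) ^ p :=
      Real.rpow_le_rpow (by positivity) hcab (by linarith)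
    rw [hcα, haα, hbα]
    nlinarith [hkey, hmul1, hmul2]
  · rw [haα, hbα]
    have hcoef : 2 ^ p - 1 ≤ (ω + L) ^ p - L ^ p := by
      have h3 : (1 + ω) ^ p - 1 ^ p ≤ (L + ω) ^ p - L ^ p :=
        key_rpow p ω 1 L hp (by linarith) zero_le_one hL
      have h4 : (2:ℝ) ^ p ≤ (1 + ω) ^ p := Real.rpow_le_rpow (by norm_num) (by linarith) (by linarith)
      rw [Real.one_rpow] at h3
      rw [show L + ω = ω + L by ring] at h3
      linarith
    have hYp : 0 ≤ Y ^ p := Real.rpow_nonneg hY0 _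
    nlinarith
end
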